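/- (Theorem 1.) Let F be (ℓ,ω)-smooth on X∩S and Φ* := inf_{x∈X}Φ(x) > −∞. On a probability space, let x_0 ∈ X∩S be fixed and let the Stochastic Mirror Descent iterates be x_{t+1} = argmin_{x∈X}[η_t(⟨g_t, x⟩ + r(x)) + D_ω(x, x_t)], where g_t is a random vector satisfying E[g_t | x_0,…,x_t] = ∇F(x_t) and E[‖g_t − ∇F(x_t)‖_*² | x_0,…,x_t] ≤ σ². Let the step-sizes {η_t}_{t≥0} be positive, non-increasing, with η_0 ≤ 1/(2ℓ). Then for every T ≥ 1, the weighted average of the Bregman Forward-Backward Envelope satisfies (Σ_{t=0}^{T−1} η_t)⁻¹ · Σ_{t=0}^{T−1} η_t·E[𝒟_{3ℓ}(x_t)] ≤ (3λ_0 + 6ℓσ²·Σ_{t=0}^{T−1} η_t²)/(Σ_{t=0}^{T−1} η_t), where λ_0 := Φ_{1/(2ℓ)}(x_0) − Φ* + Φ(x_0) − Φ*. (Equivalently, a point x̄_T drawn from x_0,…,x_{T−1} with probabilities p_t = η_t/Σ_{s<T}η_s satisfies E[𝒟_{3ℓ}(x̄_T)] bounded by the right-hand side.) -/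

import Mathlib

open RealInnerProductSpace Set MeasureTheory

abbrev Euc (d : ℕ) := EuclideanSpace ℝ (Fin d)

noncomputable def breg {d : ℕ} (ω : Euc d → ℝ) (ω' : Euc d → Euc d) (x y : Euc d) : ℝ :=
  ω x - ω y - ⟪ω' y, x - y⟫

lemma breg_three {d : ℕ} (ω : Euc d → ℝ) (ω' : Euc d → Euc d) (u p x : Euc d) :
    ⟪ω' p - ω' x, u - p⟫ = breg ω ω' u x - breg ω ω' u p - breg ω ω' p x := by
  simp only [breg, inner_sub_left, inner_sub_right]
  ring

lemma breg_diff_base {d : ℕ} (ω : Euc d → ℝ) (ω' : Euc d → Euc d) (a b z z' : Euc d) :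
    (breg ω ω' a z - breg ω ω' a z') - (breg ω ω' b z - breg ω ω' b z') =
      ⟪ω' z' - ω' z, a - b⟫ := by
  simp only [breg, inner_sub_left, inner_sub_right]
  ring

lemma aux_gradF {d : ℕ} {F ω : Euc d → ℝ} {Fp : Euc d} {ω' : Euc d → Euc d} {p : Euc d}
    (hF : HasGradientAt F Fp p) (hω : HasGradientAt ω (ω' p) p) (a : Euc d) (κ b : ℝ) :
    HasGradientAt (fun z => F z + ⟪a, z⟫ + κ * ω z + b) (Fp + a + κ • ω' p) p := by
  rw [hasGradientAt_iff_hasFDerivAt] at hF hω ⊢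
  have h1 : HasFDerivAt (fun z : Euc d => ⟪a, z⟫)
      ((InnerProductSpace.toDual ℝ (Euc d)) a) p := by
    have := ((InnerProductSpace.toDual ℝ (Euc d)) a).hasFDerivAt (x := p)
    refine this.congr_of_eventuallyEq (Filter.Eventually.of_forall fun z => ?_)
    simp [InnerProductSpace.toDual_apply_apply]
  have h2 := ((hF.add h1).add (hω.const_mul κ)).add_const b
  refine h2.congr_fderiv ?_
  ext v
  simp [InnerProductSpace.toDual_apply_apply, inner_add_left, real_inner_smul_left]
  try ring

lemma foc {d : ℕ} {X : Set (Euc d)} (hX : Convex ℝ X) {c : Euc d → ℝ} {c' p : Euc d}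
    (hc : HasGradientAt c c' p) {rr : Euc d → ℝ} (hrr : ConvexOn ℝ Set.univ rr)
    (hp : p ∈ X) (hmin : IsMinOn (fun z => c z + rr z) X p) :
    ∀ u ∈ X, 0 ≤ ⟪c', u - p⟫ + rr u - rr p := by
  intro u hu
  set dv := u - p with hdv
  have hline : HasDerivAt (fun s : ℝ => p + s • dv) dv 0 := by
    simpa using ((hasDerivAt_id (0:ℝ)).smul_const dv).const_add p
  have hψ : HasDerivAt (fun s : ℝ => c (p + s • dv)) ⟪c', dv⟫ 0 := by
    have h0 : p + (0:ℝ) • dv = p := by simp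
    have := hc.hasFDerivAt.comp_hasDerivAt_of_eq (0:ℝ) hline h0.symm
    simpa [Function.comp_def, InnerProductSpace.toDual_apply_apply] using this
  -- slope lower bound
  have hslope : ∀ s : ℝ, s ∈ Ioc (0:ℝ) 1 →
      rr p - rr u ≤ slope (fun s : ℝ => c (p + s • dv)) 0 s := by
    intro s hs
    have hs0 : (0:ℝ) < s := hs.1
    have hz : p + s • dv = (1 - s) • p + s • u := by
      rw [hdv, smul_sub, sub_smul, one_smul]; abel
    have hzX : p + s • dv ∈ X := by
      rw [hz]
      exact hX hp hu (by linarith [hs.2]) hs0.le (by ring)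
    have hrz : rr (p + s • dv) ≤ (1 - s) * rr p + s * rr u := by
      rw [hz]
      have := hrr.2 (mem_univ p) (mem_univ u) (by linarith [hs.2] : (0:ℝ) ≤ 1 - s) hs0.le
        (by ring)
      simpa [smul_eq_mul] using this
    have hminz := hmin hzX
    simp only [mem_setOf_eq] at hminz
    have hgrow : s * (rr p - rr u) ≤ c (p + s • dv) - c p := by
      have : c p + rr p ≤ c (p + s • dv) + rr (p + s • dv) := hminz
      nlinarith [hrz]
    have hψ0 : c (p + (0:ℝ) • dv) = c p := by simp
    rw [slope_def_field, hψ0, sub_zero, le_div_iff₀ hs0]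
    nlinarith [hgrow]
  have hL : rr p - rr u ≤ ⟪c', dv⟫ := by
    have htend := hψ.hasDerivWithinAt (s := Ioi (0:ℝ))
    rw [hasDerivWithinAt_iff_tendsto_slope' (by simp : (0:ℝ) ∉ Ioi (0:ℝ))] at htend
    exact ge_of_tendsto htend (Filter.eventually_of_mem (Ioc_mem_nhdsGT one_pos) hslope)
  linarith [hL]

lemma coord_abs_le_norm {d : ℕ} (x : Euc d) (i : Fin d) : |x i| ≤ ‖x‖ := by
  have h := abs_real_inner_le_norm (EuclideanSpace.single i (1:ℝ)) x
  simpa [EuclideanSpace.inner_single_left, EuclideanSpace.norm_single] using h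

/-- The Bregman Forward-Backward Envelope
`𝒟_ρ(x) = -2ρ ⬝ min_{y ∈ X} [⟨∇F x, y - x⟩ + ρ D_ω(y, x) + r y - r x]`. -/
noncomputable def Dfbe {d : ℕ} (X : Set (Euc d)) (F' : Euc d → Euc d) (r : Euc d → ℝ)
    (ω : Euc d → ℝ) (ω' : Euc d → Euc d) (ρ : ℝ) (x : Euc d) : ℝ :=
  -2 * ρ * sInf ((fun y => ⟪F' x, y - x⟫ + ρ * breg ω ω' y x + r y - r x) '' X)

/-- The Bregman Moreau envelope `Φ_{1/ρ}(x) = min_{y ∈ X} [Φ y + ρ D_ω(y, x)]` of `Φ = F + r`. -/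
noncomputable def moreau {d : ℕ} (X : Set (Euc d)) (F r ω : Euc d → ℝ) (ω' : Euc d → Euc d)
    (ρ : ℝ) (x : Euc d) : ℝ :=
  sInf ((fun y => F y + r y + ρ * breg ω ω' y x) '' X)

/-- The σ-algebra generated by the iterates `x 0, …, x t`. -/
noncomputable def filt {Ω : Type*} {d : ℕ} (x : ℕ → Ω → Euc d) (t : ℕ) :
    MeasurableSpace Ω :=
  ⨆ s ∈ Set.Iic t, MeasurableSpace.comap (x s) inferInstance

set_option maxHeartbeats 2000000 in
/-- Theorem 1: convergence of Stochastic Mirror Descent to first-order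
stationarity in expectation, measured by the Bregman Forward-Backward Envelope `𝒟_{3ℓ}`. -/
theorem smd_convergence_in_expectation {d : ℕ}
    {Ω : Type} [MeasurableSpace Ω] (μ : Measure Ω) [IsProbabilityMeasure μ]
    (X S : Set (Euc d))
    (F r ω : Euc d → ℝ) (F' ω' : Euc d → Euc d) (ℓ σ : ℝ) (hℓ : 0 < ℓ) (hσ : 0 ≤ σ)
    (hXclosed : IsClosed X) (hXconv : Convex ℝ X) (hXne : X.Nonempty)
    (hSopen : IsOpen S) (hriS : intrinsicInterior ℝ X ⊆ S)
    (hωdiff : ∀ z ∈ S, HasGradientAt ω (ω' z) z)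
    (hω'cont : ContinuousOn ω' S)
    (hstrong : ∀ z ∈ closure S, ∀ y ∈ closure S, (1 / 2) * ‖z - y‖ ^ 2 ≤ breg ω ω' z y)
    (hr : ConvexOn ℝ Set.univ r) (hrlsc : LowerSemicontinuous r)
    (hFdiff : ∀ z ∈ X ∩ S, HasGradientAt F (F' z) z)
    (hsmooth : ∀ z ∈ X ∩ S, ∀ y ∈ X ∩ S,
      -(ℓ * breg ω ω' z y) ≤ F z - F y - ⟪F' y, z - y⟫ ∧
        F z - F y - ⟪F' y, z - y⟫ ≤ ℓ * breg ω ω' z y)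
    (hΦbdd : BddBelow ((fun z => F z + r z) '' X))
    (x g : ℕ → Ω → Euc d)
    (η : ℕ → ℝ) (hηpos : ∀ t, 0 < η t) (hηmono : ∀ t, η (t + 1) ≤ η t)
    (hη0 : η 0 ≤ 1 / (2 * ℓ))
    (x0 : Euc d) (hx0 : ∀ w, x 0 w = x0) (hx0mem : x0 ∈ X ∩ S)
    (hmem : ∀ t w, x t w ∈ X ∩ S)
    (hxmeas : ∀ t, Measurable (x t)) (hgmeas : ∀ t, Measurable (g t))
    (halg : ∀ t w, IsMinOn
      (fun z => η t * (⟪g t w, z⟫ + r z) + breg ω ω' z (x t w)) X (x (t + 1) w))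
    (hgint : ∀ t, Integrable (g t) μ)
    (hunbiased : ∀ t, μ[g t|filt x t] =ᵐ[μ] fun w => F' (x t w))
    (hvarint : ∀ t, Integrable (fun w => ‖g t w - F' (x t w)‖ ^ 2) μ)
    (hvar : ∀ t, ∀ᵐ w ∂μ, (μ[fun w' => ‖g t w' - F' (x t w')‖ ^ 2|filt x t]) w ≤ σ ^ 2)
    (hmoreau_att : ∀ z ∈ X ∩ S, ∃ y ∈ X ∩ S,
      IsMinOn (fun u => F u + r u + 2 * ℓ * breg ω ω' u z) X y)
    (hfbe_att : ∀ z ∈ X ∩ S, ∃ y ∈ X ∩ S,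
      IsMinOn (fun u => ⟪F' z, u - z⟫ + 3 * ℓ * breg ω ω' u z + r u - r z) X y)
    (hDint : ∀ t, Integrable (fun w => Dfbe X F' r ω ω' (3 * ℓ) (x t w)) μ)
    (hΦint : ∀ t, Integrable (fun w => F (x t w) + r (x t w)) μ)
    (hmint : ∀ t, Integrable (fun w => moreau X F r ω ω' (2 * ℓ) (x t w)) μ)
    (T : ℕ) (hT : 1 ≤ T) :
    (∑ t ∈ Finset.range T, η t)⁻¹ *
        ∑ t ∈ Finset.range T, η t * ∫ w, Dfbe X F' r ω ω' (3 * ℓ) (x t w) ∂μ ≤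
      (3 * (moreau X F r ω ω' (2 * ℓ) x0 - sInf ((fun z => F z + r z) '' X) +
            (F x0 + r x0 - sInf ((fun z => F z + r z) '' X))) +
          6 * ℓ * σ ^ 2 * ∑ t ∈ Finset.range T, η t ^ 2) /
        ∑ t ∈ Finset.range T, η t := by
  classical
  have hXS_S : X ∩ S ⊆ S := inter_subset_right
  have hXS_cl : X ∩ S ⊆ closure S := fun z hz => subset_closure hz.2
  have hD0 : ∀ z ∈ X ∩ S, ∀ y ∈ X ∩ S, 0 ≤ breg ω ω' z y := by
    intro z hz y hy
    have := hstrong z (hXS_cl hz) y (hXS_cl hy)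
    nlinarith [sq_nonneg ‖z - y‖]
  have hηanti : ∀ t, η t ≤ η 0 := by
    intro t
    induction t with
    | zero => exact le_refl _
    | succ n ih => exact (hηmono n).trans ih
  have hη2 : ∀ t, 2 * ℓ * η t ≤ 1 := by
    intro t
    have h1 : η t ≤ 1 / (2 * ℓ) := (hηanti t).trans hη0
    rw [le_div_iff₀ (by linarith)] at h1
    linarith
  set Φs := sInf ((fun z => F z + r z) '' X) with hΦsdef
  have hΦs_le : ∀ z ∈ X, Φs ≤ F z + r z := fun z hz => csInf_le hΦbdd ⟨z, hz, rfl⟩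
  -- prox selection
  choose! hsel hselmem hselmin using hmoreau_att
  set h : Euc d → Euc d := fun z => if hz : z ∈ X ∩ S then hsel z else x0 with hhdef
  have hh_eq : ∀ z ∈ X ∩ S, h z = hsel z := fun z hz => dif_pos hz
  have hh_mem : ∀ z ∈ X ∩ S, h z ∈ X ∩ S := by
    intro z hz; rw [hh_eq z hz]; exact hselmem z hz
  have hh_min : ∀ z ∈ X ∩ S,
      IsMinOn (fun u => F u + r u + 2 * ℓ * breg ω ω' u z) X (h z) := by
    intro z hz; rw [hh_eq z hz]; exact hselmin z hz
  -- first-order condition at the prox point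
  have hprfoc : ∀ z ∈ X ∩ S, ∀ u ∈ X,
      0 ≤ ⟪F' (h z) + (-(2*ℓ)) • ω' z + (2*ℓ) • ω' (h z), u - h z⟫ + r u - r (h z) := by
    intro z hz u hu
    have hfun : (fun u => F u + r u + 2 * ℓ * breg ω ω' u z) =
        (fun u => (F u + ⟪(-(2*ℓ)) • ω' z, u⟫ + (2*ℓ) * ω u +
          (-(2*ℓ) * ω z + 2*ℓ * ⟪ω' z, z⟫)) + r u) := by
      funext v
      simp only [breg, inner_sub_right, real_inner_smul_left]
      ring
    have hmin := hh_min z hz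
    rw [hfun] at hmin
    have hgrad := aux_gradF (hFdiff (h z) (hh_mem z hz)) (hωdiff (h z) (hh_mem z hz).2)
      ((-(2*ℓ)) • ω' z) (2*ℓ) (-(2*ℓ) * ω z + 2*ℓ * ⟪ω' z, z⟫)
    have := foc hXconv hgrad hr (hh_mem z hz).1 hmin u hu
    simpa using this
  -- quadratic growth of the Moreau objective at the prox point
  have hgrow : ∀ z ∈ X ∩ S, ∀ u ∈ X ∩ S,
      (F (h z) + r (h z) + 2*ℓ * breg ω ω' (h z) z) + ℓ * breg ω ω' u (h z) ≤
        F u + r u + 2*ℓ * breg ω ω' u z := by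
    intro z hz u hu
    have hfoc := hprfoc z hz u hu.1
    have hsm := (hsmooth u hu (h z) (hh_mem z hz)).1
    have h3 := breg_three ω ω' u (h z) z
    have hsplit : ⟪F' (h z) + (-(2*ℓ)) • ω' z + (2*ℓ) • ω' (h z), u - h z⟫ =
        ⟪F' (h z), u - h z⟫ + (2*ℓ) * ⟪ω' (h z) - ω' z, u - h z⟫ := by
      simp only [inner_add_left, real_inner_smul_left, inner_sub_left]
      ring
    rw [hsplit, h3] at hfoc
    nlinarith [hfoc, hsm]
  -- Moreau envelope value facts
  have hφeq : ∀ z ∈ X ∩ S, moreau X F r ω ω' (2*ℓ) z =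
      F (h z) + r (h z) + 2*ℓ * breg ω ω' (h z) z := by
    intro z hz
    refine (IsLeast.csInf_eq ⟨⟨h z, (hh_mem z hz).1, rfl⟩, ?_⟩)
    rintro v ⟨u, hu, rfl⟩
    exact hh_min z hz hu
  have hbdd : ∀ z ∈ X ∩ S,
      BddBelow ((fun y => F y + r y + 2*ℓ * breg ω ω' y z) '' X) := by
    intro z hz
    exact ⟨F (h z) + r (h z) + 2*ℓ * breg ω ω' (h z) z, by
      rintro v ⟨u, hu, rfl⟩; exact hh_min z hz hu⟩
  have hφle : ∀ z ∈ X ∩ S, ∀ u ∈ X,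
      moreau X F r ω ω' (2*ℓ) z ≤ F u + r u + 2*ℓ * breg ω ω' u z :=
    fun z hz u hu => csInf_le (hbdd z hz) ⟨u, hu, rfl⟩
  have hbreg_self : ∀ z : Euc d, breg ω ω' z z = 0 := by
    intro z; simp [breg]
  have hφleΦ : ∀ z ∈ X ∩ S, moreau X F r ω ω' (2*ℓ) z ≤ F z + r z := by
    intro z hz
    have := hφle z hz z hz.1
    rw [hbreg_self] at this; linarith
  have hφgeΦs : ∀ z ∈ X ∩ S, Φs ≤ moreau X F r ω ω' (2*ℓ) z := by
    intro z hz
    rw [hφeq z hz]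
    have h1 := hΦs_le (h z) (hh_mem z hz).1
    have h2 := hD0 (h z) (hh_mem z hz) z hz
    nlinarith
  -- Lipschitz property of the prox map
  have hlip : ∀ z ∈ X ∩ S, ∀ z' ∈ X ∩ S, ‖h z - h z'‖ ≤ 2 * ‖ω' z - ω' z'‖ := by
    intro z hz z' hz'
    have g1 := hgrow z hz (h z') (hh_mem z' hz')
    have g2 := hgrow z' hz' (h z) (hh_mem z hz)
    have hd := breg_diff_base ω ω' (h z') (h z) z z'
    have hs1 := hstrong (h z') (hXS_cl (hh_mem z' hz')) (h z) (hXS_cl (hh_mem z hz))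
    have hs2 := hstrong (h z) (hXS_cl (hh_mem z hz)) (h z') (hXS_cl (hh_mem z' hz'))
    have hcs : ⟪ω' z' - ω' z, h z' - h z⟫ ≤ ‖ω' z - ω' z'‖ * ‖h z - h z'‖ := by
      have := real_inner_le_norm (ω' z' - ω' z) (h z' - h z)
      rw [norm_sub_rev (ω' z') (ω' z), norm_sub_rev (h z') (h z)] at this
      exact this
    have hnorm_eq : ‖h z' - h z‖ = ‖h z - h z'‖ := norm_sub_rev _ _
    have hsq : ‖h z' - h z‖^2 = ‖h z - h z'‖^2 := by rw [hnorm_eq]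
    have e1 : ℓ * (breg ω ω' (h z') (h z) + breg ω ω' (h z) (h z')) ≤
        2*ℓ * ⟪ω' z' - ω' z, h z' - h z⟫ := by
      have hd2 := congrArg (fun q => 2*ℓ*q) hd
      linarith [g1, g2, hd2]
    have e2 : ℓ * ‖h z - h z'‖^2 ≤ ℓ * (breg ω ω' (h z') (h z) + breg ω ω' (h z) (h z')) := by
      nlinarith [hs1, hs2, hsq, hℓ.le]
    have e3 : 2*ℓ*⟪ω' z' - ω' z, h z' - h z⟫ ≤ 2*ℓ*(‖ω' z - ω' z'‖ * ‖h z - h z'‖) :=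
      mul_le_mul_of_nonneg_left hcs (by linarith)
    have hkey : ℓ * ‖h z - h z'‖^2 ≤ 2*ℓ * (‖ω' z - ω' z'‖ * ‖h z - h z'‖) := by
      linarith [e1, e2, e3]
    rcases eq_or_lt_of_le (norm_nonneg (h z - h z')) with hzero | hpos
    · rw [← hzero]; positivity
    · nlinarith [hkey, mul_pos hℓ hpos]
  -- FBE vs Moreau gap comparison
  have hC : ∀ z ∈ X ∩ S, Dfbe X F' r ω ω' (3*ℓ) z ≤
      6*ℓ*((F z + r z) - moreau X F r ω ω' (2*ℓ) z) := by
    intro z hz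
    obtain ⟨y, hy, hymin⟩ := hfbe_att z hz
    have hmeq : sInf ((fun u => ⟪F' z, u - z⟫ + 3 * ℓ * breg ω ω' u z + r u - r z) '' X) =
        ⟪F' z, y - z⟫ + 3 * ℓ * breg ω ω' y z + r y - r z :=
      IsLeast.csInf_eq ⟨⟨y, hy.1, rfl⟩, by rintro v ⟨u, hu, rfl⟩; exact hymin hu⟩
    have h1 : moreau X F r ω ω' (2*ℓ) z ≤ F y + r y + 2*ℓ * breg ω ω' y z := hφle z hz y hy.1
    have h2 := (hsmooth y hy z hz).2
    have hm_lb : moreau X F r ω ω' (2*ℓ) z - (F z + r z) ≤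
        ⟪F' z, y - z⟫ + 3 * ℓ * breg ω ω' y z + r y - r z := by linarith
    have hD : Dfbe X F' r ω ω' (3*ℓ) z =
        -2 * (3*ℓ) * (⟪F' z, y - z⟫ + 3 * ℓ * breg ω ω' y z + r y - r z) := by
      rw [Dfbe, hmeq]
    rw [hD]
    have := mul_le_mul_of_nonneg_left hm_lb (by linarith : (0:ℝ) ≤ 6*ℓ)
    linarith
  -- the pathwise one-step inequality
  have hstep : ∀ t w,
      2*ℓ*η t*((F (x t w) + r (x t w)) - moreau X F r ω ω' (2*ℓ) (x t w)) ≤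
        (moreau X F r ω ω' (2*ℓ) (x t w) - moreau X F r ω ω' (2*ℓ) (x (t+1) w))
        + 2*ℓ*η t*((F (x t w) + r (x t w)) - (F (x (t+1) w) + r (x (t+1) w)))
        + 2*ℓ*(η t)^2*‖g t w - F' (x t w)‖^2
        + 2*ℓ*η t*⟪g t w - F' (x t w), h (x t w) - x t w⟫ := by
    intro t w
    have hmin := halg t w
    set e := η t with he
    set xx := x t w with hxx
    set p := x (t+1) w with hp
    set gg := g t w with hgg
    have hxxm : xx ∈ X ∩ S := hmem t w
    have hpm : p ∈ X ∩ S := hmem (t+1) w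
    have hym : h xx ∈ X ∩ S := hh_mem xx hxxm
    have he0 : 0 < e := hηpos t
    have he1 : 2*ℓ*e ≤ 1 := hη2 t
    -- FOC for the SMD step
    have hfun : (fun z => e * (⟪gg, z⟫ + r z) + breg ω ω' z xx) =
        (fun z => ((fun _ : Euc d => (0:ℝ)) z + ⟪e • gg - ω' xx, z⟫ + 1 * ω z +
          (- ω xx + ⟪ω' xx, xx⟫)) + e * r z) := by
      funext v
      simp only [breg, inner_sub_right, inner_sub_left, real_inner_smul_left]
      ring
    rw [hfun] at hmin
    have hrc : ConvexOn ℝ Set.univ (fun z : Euc d => e * r z) := by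
      have h0 := hr.smul he0.le
      have : (fun z : Euc d => e * r z) = e • r := by funext v; simp
      rw [this]; exact h0
    have hgrad := aux_gradF (hasGradientAt_const p (0:ℝ)) (hωdiff p hpm.2)
      (e • gg - ω' xx) 1 (- ω xx + ⟪ω' xx, xx⟫)
    have hfoc := foc hXconv hgrad hrc hpm.1 hmin (h xx) hym.1
    have hsplit : ⟪(0:Euc d) + (e • gg - ω' xx) + (1:ℝ) • ω' p, h xx - p⟫ =
        e * ⟪gg, h xx - p⟫ + ⟪ω' p - ω' xx, h xx - p⟫ := by
      simp only [inner_add_left, inner_sub_left, real_inner_smul_left, inner_zero_left, one_smul]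
      ring
    rw [hsplit, breg_three ω ω' (h xx) p xx] at hfoc
    have f1 : 0 ≤ e*⟪gg, h xx - p⟫ + e*r (h xx) - e*r p +
        (breg ω ω' (h xx) xx - breg ω ω' (h xx) p - breg ω ω' p xx) := by linarith
    have s1 : 0 ≤ 2*ℓ*(e*⟪gg, h xx - p⟫ + e*r (h xx) - e*r p +
        (breg ω ω' (h xx) xx - breg ω ω' (h xx) p - breg ω ω' p xx)) :=
      mul_nonneg (by linarith) f1
    have s2 : moreau X F r ω ω' (2*ℓ) p ≤ F (h xx) + r (h xx) + 2*ℓ * breg ω ω' (h xx) p :=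
      hφle p hpm (h xx) hym.1
    have s3 : moreau X F r ω ω' (2*ℓ) xx = F (h xx) + r (h xx) + 2*ℓ * breg ω ω' (h xx) xx :=
      hφeq xx hxxm
    have s3s := congrArg (fun q => 2*ℓ*e*q) s3
    have f4 := (hsmooth (h xx) hym xx hxxm).1
    have f4' : ⟪F' xx, h xx - xx⟫ ≤ F (h xx) - F xx + ℓ*breg ω ω' (h xx) xx := by linarith
    have s4 := mul_le_mul_of_nonneg_left f4' (by positivity : (0:ℝ) ≤ 2*ℓ*e)
    have f5 := (hsmooth p hpm xx hxxm).2
    have hflip : ⟪F' xx, xx - p⟫ = -⟪F' xx, p - xx⟫ := by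
      rw [← inner_neg_right]; congr 1; abel
    have f5' : ⟪F' xx, xx - p⟫ ≤ F xx - F p + ℓ*breg ω ω' p xx := by
      rw [hflip]; linarith
    have s5 := mul_le_mul_of_nonneg_left f5' (by positivity : (0:ℝ) ≤ 2*ℓ*e)
    -- Young's inequality for the inner product with the noise
    have hcs := real_inner_le_norm (gg - F' xx) (xx - p)
    rw [norm_sub_rev xx p] at hcs
    have hst := hstrong p (hXS_cl hpm) xx (hXS_cl hxxm)
    have s6 : 2*ℓ*e*⟪gg - F' xx, xx - p⟫ ≤ 2*ℓ*e^2*‖gg - F' xx‖^2 + ℓ*breg ω ω' p xx := by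
      have h6a := mul_le_mul_of_nonneg_left hcs (by positivity : (0:ℝ) ≤ 2*ℓ*e)
      nlinarith [sq_nonneg (2*e*‖gg - F' xx‖ - ‖p - xx‖), hℓ.le, hst, norm_nonneg (gg - F' xx),
        norm_nonneg (p - xx)]
    have f7 : ⟪gg, h xx - p⟫ = ⟪F' xx, h xx - xx⟫ + ⟪F' xx, xx - p⟫ +
        ⟪gg - F' xx, h xx - xx⟫ + ⟪gg - F' xx, xx - p⟫ := by
      simp only [inner_sub_left, inner_sub_right]
      ring
    have s7 := congrArg (fun q => 2*ℓ*e*q) f7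
    have s11 : 0 ≤ 2*ℓ^2*e*breg ω ω' (h xx) xx := by
      have := hD0 (h xx) hym xx hxxm
      positivity
    have s12 : 0 ≤ ℓ*((1 - 2*ℓ*e) * breg ω ω' p xx) :=
      mul_nonneg hℓ.le (mul_nonneg (by linarith) (hD0 p hpm xx hxxm))
    nlinarith [s1, s2, s3, s3s, s4, s5, s6, s7, s11, s12]
  -- measurability of the prox selection
  have hXSmeas : MeasurableSet (X ∩ S) := hXclosed.measurableSet.inter hSopen.measurableSet
  have hhcont : ContinuousOn h (X ∩ S) := by
    intro z hz
    have hω'c : ContinuousWithinAt ω' (X ∩ S) z := (hω'cont z hz.2).mono hXS_S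
    have hg0 : Filter.Tendsto (fun z' => 2 * ‖ω' z' - ω' z‖) (nhdsWithin z (X ∩ S)) (nhds 0) := by
      have := ((hω'c.sub (tendsto_const_nhds (x := ω' z))).norm).const_mul (2:ℝ)
      simpa [ContinuousWithinAt] using this
    have h1 : Filter.Tendsto (fun z' => ‖h z' - h z‖) (nhdsWithin z (X ∩ S)) (nhds 0) :=
      squeeze_zero' (Filter.Eventually.of_forall fun _ => norm_nonneg _)
        (Filter.eventually_of_mem self_mem_nhdsWithin fun z' hz' => hlip z' hz' z hz) hg0
    exact tendsto_iff_norm_sub_tendsto_zero.mpr h1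
  have hhmeas : Measurable h := by
    have hrest : Measurable ((X ∩ S).restrict h) := (ContinuousOn.restrict hhcont).measurable
    have hform : h = fun z =>
        if hz : z ∈ X ∩ S then (X ∩ S).restrict h ⟨z, hz⟩ else (fun _ : ↥(X ∩ S)ᶜ => x0) ⟨z, hz⟩ := by
      funext z
      by_cases hz : z ∈ X ∩ S <;> simp only [hhdef, hz, Set.restrict, Set.domRestrict, dif_pos, dif_neg, not_false_iff]
    rw [hform]
    exact Measurable.dite hrest measurable_const hXSmeas
  -- filtration facts
  have hm_le : ∀ t, filt x t ≤ (inferInstance : MeasurableSpace Ω) := by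
    intro t
    simp only [filt]
    exact iSup₂_le fun s _ => (hxmeas s).comap_le
  -- second moment bound
  have hvar' : ∀ t, ∫ w, ‖g t w - F' (x t w)‖^2 ∂μ ≤ σ^2 := by
    intro t
    rw [← integral_condExp (hm_le t) (f := fun w => ‖g t w - F' (x t w)‖^2)]
    have h2 := integral_mono_ae integrable_condExp (integrable_const (σ^2)) (hvar t)
    simpa [measure_univ] using h2
  -- noise process facts
  have hFaesm : ∀ t, AEStronglyMeasurable (fun w => F' (x t w)) μ := fun t =>
    ((stronglyMeasurable_condExp.mono (hm_le t)).aestronglyMeasurable).congr (hunbiased t)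
  have hFint : ∀ t, Integrable (fun w => F' (x t w)) μ := fun t =>
    integrable_condExp.congr (hunbiased t)
  have hδint : ∀ t, Integrable (fun w => g t w - F' (x t w)) μ := fun t =>
    (hgint t).sub (hFint t)
  have hδaesm : ∀ t, AEStronglyMeasurable (fun w => g t w - F' (x t w)) μ := fun t =>
    (hgmeas t).aestronglyMeasurable.sub (hFaesm t)
  have hVmeas : ∀ t, Measurable (fun w => h (x t w) - x t w) := fun t =>
    (hhmeas.comp (hxmeas t)).sub (hxmeas t)
  -- square-integrability of the distance to the prox point
  have hVL2 : ∀ t, Integrable (fun w => ‖h (x t w) - x t w‖^2) μ := by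
    intro t
    have hbd : ∀ w, ‖h (x t w) - x t w‖^2 ≤ (F (x t w) + r (x t w) - Φs)/ℓ := by
      intro w
      have hxxm := hmem t w
      have hym := hh_mem _ hxxm
      have b1 := hstrong (h (x t w)) (hXS_cl hym) (x t w) (hXS_cl hxxm)
      have b1' := mul_le_mul_of_nonneg_left b1 (by positivity : (0:ℝ) ≤ 2*ℓ)
      have b2 := hφeq _ hxxm
      have b3 := hφleΦ _ hxxm
      have b4 := hΦs_le _ hym.1
      rw [le_div_iff₀ hℓ]
      nlinarith [b1', b2, b3, b4]
    refine Integrable.mono (((hΦint t).sub (integrable_const Φs)).div_const ℓ)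
      (((hVmeas t).norm.pow_const 2).aestronglyMeasurable) ?_
    filter_upwards with w
    rw [Real.norm_eq_abs, Real.norm_eq_abs, abs_of_nonneg (by positivity)]
    exact (hbd w).trans (le_abs_self _)
  -- integrability of the inner product term
  have hinner_int : ∀ t,
      Integrable (fun w => ⟪g t w - F' (x t w), h (x t w) - x t w⟫) μ := by
    intro t
    refine Integrable.mono (((hvarint t).add (hVL2 t)).div_const 2)
      ((hδaesm t).inner ((hVmeas t).aestronglyMeasurable)) ?_
    filter_upwards with w
    rw [Real.norm_eq_abs, Real.norm_eq_abs]
    have h1 := abs_real_inner_le_norm (g t w - F' (x t w)) (h (x t w) - x t w)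
    have h2 : ‖g t w - F' (x t w)‖ * ‖h (x t w) - x t w‖ ≤
        (‖g t w - F' (x t w)‖^2 + ‖h (x t w) - x t w‖^2)/2 := by
      nlinarith [sq_nonneg (‖g t w - F' (x t w)‖ - ‖h (x t w) - x t w‖)]
    calc |⟪g t w - F' (x t w), h (x t w) - x t w⟫| ≤
        (‖g t w - F' (x t w)‖^2 + ‖h (x t w) - x t w‖^2)/2 := h1.trans h2
      _ ≤ |(‖g t w - F' (x t w)‖^2 + ‖h (x t w) - x t w‖^2)/2| := le_abs_self _
  -- the martingale term vanishes in expectation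
  have hmart : ∀ t, ∫ w, ⟪g t w - F' (x t w), h (x t w) - x t w⟫ ∂μ = 0 := by
    intro t
    have hδcond : μ[(fun w => g t w - F' (x t w))|filt x t] =ᵐ[μ] 0 := by
      have h1 := condExp_sub (m := filt x t) (hgint t) (hFint t)
      refine h1.trans ?_
      have hFcond : μ[(fun w => F' (x t w))|filt x t] =ᵐ[μ] fun w => F' (x t w) := by
        have h2 : μ[(fun w => F' (x t w))|filt x t] =ᵐ[μ] μ[μ[g t|filt x t]|filt x t] :=
          condExp_congr_ae (hunbiased t).symm
        have h3 : μ[μ[g t|filt x t]|filt x t] =ᵐ[μ] μ[g t|filt x t] :=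
          condExp_condExp_of_le le_rfl (hm_le t)
        exact (h2.trans h3).trans (hunbiased t)
      filter_upwards [hunbiased t, hFcond] with w e1 e2
      simp only [Pi.sub_apply, Pi.zero_apply, e1, e2, sub_self]
    -- V is measurable w.r.t. the filtration
    have hxm : Measurable[filt x t] (x t) := by
      have h1 : Measurable[MeasurableSpace.comap (x t) inferInstance] (x t) :=
        comap_measurable (x t)
      refine h1.mono ?_ le_rfl
      simp only [filt]
      exact le_iSup₂ (f := fun s (_ : s ∈ Set.Iic t) =>
        MeasurableSpace.comap (x s) inferInstance) t (Set.mem_Iic.mpr le_rfl)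
    have hVm : Measurable[filt x t] (fun w => h (x t w) - x t w) :=
      (hhmeas.comp hxm).sub hxm
    -- coordinatewise
    have key : ∀ i : Fin d, ∫ w, (g t w - F' (x t w)) i * (h (x t w) - x t w) i ∂μ = 0 := by
      intro i
      have hδi_int : Integrable (fun w => (g t w - F' (x t w)) i) μ :=
        (EuclideanSpace.proj (𝕜 := ℝ) i).integrable_comp (hδint t)
      have hδi_cond : (fun _ => (0:ℝ)) =ᵐ[μ] μ[(fun w => (g t w - F' (x t w)) i)|filt x t] := by
        refine ae_eq_condExp_of_forall_setIntegral_eq (hm_le t) hδi_int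
          (fun s _ _ => (integrable_const (0:ℝ)).integrableOn) (fun s hs hμs => ?_)
          (stronglyMeasurable_const.aestronglyMeasurable) 
        have e1 : ∫ w in s, (g t w - F' (x t w)) i ∂μ =
            (EuclideanSpace.proj (𝕜 := ℝ) i) (∫ w in s, (g t w - F' (x t w)) ∂μ) :=
          ContinuousLinearMap.integral_comp_comm (EuclideanSpace.proj (𝕜 := ℝ) i)
            ((hδint t).restrict)
        have e2 : ∫ w in s, (g t w - F' (x t w)) ∂μ =
            ∫ w in s, (μ[(fun w => g t w - F' (x t w))|filt x t]) w ∂μ :=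
          (setIntegral_condExp (hm_le t) (hδint t) hs).symm
        have e3 : ∫ w in s, (μ[(fun w => g t w - F' (x t w))|filt x t]) w ∂μ = 0 := by
          rw [integral_congr_ae (ae_restrict_of_ae hδcond)]
          simp
        rw [e1, e2, e3]
        simp
      have hVi_sm : StronglyMeasurable[filt x t] (fun w => (h (x t w) - x t w) i) :=
        (((EuclideanSpace.proj (𝕜 := ℝ) i).continuous.measurable).comp hVm).stronglyMeasurable
      have hVi_mul_int : Integrable
          ((fun w => (h (x t w) - x t w) i) * (fun w => (g t w - F' (x t w)) i)) μ := by
        refine Integrable.mono (((hVL2 t).add (hvarint t)).div_const 2)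
          ((((EuclideanSpace.proj (𝕜 := ℝ) i).continuous.measurable.comp
            (hVmeas t)).aestronglyMeasurable).mul
            (((EuclideanSpace.proj (𝕜 := ℝ) i).continuous.comp_aestronglyMeasurable
              (hδaesm t)))) ?_
        filter_upwards with w
        rw [Real.norm_eq_abs, Real.norm_eq_abs, Pi.mul_apply, abs_mul]
        have a1 := coord_abs_le_norm (h (x t w) - x t w) i
        have a2 := coord_abs_le_norm (g t w - F' (x t w)) i
        have a3 : |(h (x t w) - x t w) i| * |(g t w - F' (x t w)) i| ≤
            ‖h (x t w) - x t w‖ * ‖g t w - F' (x t w)‖ :=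
          mul_le_mul a1 a2 (abs_nonneg _) (norm_nonneg _)
        have a4 : ‖h (x t w) - x t w‖ * ‖g t w - F' (x t w)‖ ≤
            (‖h (x t w) - x t w‖^2 + ‖g t w - F' (x t w)‖^2)/2 := by
          nlinarith [sq_nonneg (‖h (x t w) - x t w‖ - ‖g t w - F' (x t w)‖)]
        exact (a3.trans a4).trans (le_abs_self _)
      have hmul := condExp_mul_of_stronglyMeasurable_left hVi_sm hVi_mul_int hδi_int
      have hz : ∫ w, (h (x t w) - x t w) i * ((g t w - F' (x t w)) i) ∂μ = 0 := by
        have i1 : ∫ w, (h (x t w) - x t w) i * ((g t w - F' (x t w)) i) ∂μ =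
            ∫ w, (μ[(fun w => (h (x t w) - x t w) i) * (fun w => (g t w - F' (x t w)) i)|filt x t]) w ∂μ :=
          (integral_condExp (hm_le t)).symm
        rw [i1, integral_congr_ae hmul]
        have i2 : (fun w => (h (x t w) - x t w) i) * μ[(fun w => (g t w - F' (x t w)) i)|filt x t]
            =ᵐ[μ] 0 := by
          filter_upwards [hδi_cond] with w hw
          have hw' : (μ[(fun w => (g t w - F' (x t w)) i)|filt x t]) w = 0 := by rw [← hw]
          show (h (x t w) - x t w) i * (μ[(fun w => (g t w - F' (x t w)) i)|filt x t]) w = 0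
          rw [hw', mul_zero]
        rw [integral_congr_ae i2]
        simp
      calc ∫ w, (g t w - F' (x t w)) i * (h (x t w) - x t w) i ∂μ
          = ∫ w, (h (x t w) - x t w) i * ((g t w - F' (x t w)) i) ∂μ := by
            congr 1; funext w; ring
        _ = 0 := hz
    -- sum over coordinates
    have hexp : (fun w => ⟪g t w - F' (x t w), h (x t w) - x t w⟫) =
        fun w => ∑ i : Fin d, (g t w - F' (x t w)) i * (h (x t w) - x t w) i := by
      funext w
      rw [PiLp.inner_apply]
      simp [RCLike.inner_apply, conj_trivial]
      exact Finset.sum_congr rfl fun i _ => mul_comm _ _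
    rw [hexp]
    have hterm_int : ∀ i : Fin d,
        Integrable (fun w => (g t w - F' (x t w)) i * (h (x t w) - x t w) i) μ := by
      intro i
      refine Integrable.mono (((hvarint t).add (hVL2 t)).div_const 2)
        (((((EuclideanSpace.proj (𝕜 := ℝ) i).continuous.comp_aestronglyMeasurable
          (hδaesm t))).mul
          (((EuclideanSpace.proj (𝕜 := ℝ) i).continuous.measurable.comp
            (hVmeas t)).aestronglyMeasurable))) ?_
      filter_upwards with w
      rw [Real.norm_eq_abs, Real.norm_eq_abs, abs_mul]
      have a1 := coord_abs_le_norm (h (x t w) - x t w) i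
      have a2 := coord_abs_le_norm (g t w - F' (x t w)) i
      have a3 : |(g t w - F' (x t w)) i| * |(h (x t w) - x t w) i| ≤
          ‖g t w - F' (x t w)‖ * ‖h (x t w) - x t w‖ :=
        mul_le_mul a2 a1 (abs_nonneg _) (norm_nonneg _)
      have a4 : ‖g t w - F' (x t w)‖ * ‖h (x t w) - x t w‖ ≤
          (‖g t w - F' (x t w)‖^2 + ‖h (x t w) - x t w‖^2)/2 := by
        nlinarith [sq_nonneg (‖g t w - F' (x t w)‖ - ‖h (x t w) - x t w‖)]
      exact (a3.trans a4).trans (le_abs_self _)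
    rw [integral_finset_sum _ (fun i _ => hterm_int i)]
    exact Finset.sum_eq_zero fun i _ => key i
  -- integrated per-step inequality
  have hper : ∀ t, 2*ℓ*η t*((∫ w, (F (x t w) + r (x t w)) ∂μ) -
        ∫ w, moreau X F r ω ω' (2*ℓ) (x t w) ∂μ) ≤
      ((∫ w, moreau X F r ω ω' (2*ℓ) (x t w) ∂μ) -
        ∫ w, moreau X F r ω ω' (2*ℓ) (x (t+1) w) ∂μ)
      + 2*ℓ*η t*((∫ w, (F (x t w) + r (x t w)) ∂μ) -
        ∫ w, (F (x (t+1) w) + r (x (t+1) w)) ∂μ)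
      + 2*ℓ*(η t)^2*σ^2 := by
    intro t
    have hf1 : Integrable (fun w => moreau X F r ω ω' (2*ℓ) (x t w) -
        moreau X F r ω ω' (2*ℓ) (x (t+1) w)) μ := (hmint t).sub (hmint (t+1))
    have hf2 : Integrable (fun w => 2*ℓ*η t*((F (x t w) + r (x t w)) -
        (F (x (t+1) w) + r (x (t+1) w)))) μ := ((hΦint t).sub (hΦint (t+1))).const_mul _
    have hf3 : Integrable (fun w => 2*ℓ*(η t)^2*‖g t w - F' (x t w)‖^2) μ :=
      (hvarint t).const_mul _
    have hf4 : Integrable (fun w => 2*ℓ*η t*⟪g t w - F' (x t w), h (x t w) - x t w⟫) μ :=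
      (hinner_int t).const_mul _
    have hf12 : Integrable (fun w => (moreau X F r ω ω' (2*ℓ) (x t w) -
        moreau X F r ω ω' (2*ℓ) (x (t+1) w)) + 2*ℓ*η t*((F (x t w) + r (x t w)) -
        (F (x (t+1) w) + r (x (t+1) w)))) μ := hf1.add hf2
    have hf123 : Integrable (fun w => ((moreau X F r ω ω' (2*ℓ) (x t w) -
        moreau X F r ω ω' (2*ℓ) (x (t+1) w)) + 2*ℓ*η t*((F (x t w) + r (x t w)) -
        (F (x (t+1) w) + r (x (t+1) w)))) + 2*ℓ*(η t)^2*‖g t w - F' (x t w)‖^2) μ :=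
      hf12.add hf3
    have hint_L : Integrable (fun w => 2*ℓ*η t*((F (x t w) + r (x t w)) -
        moreau X F r ω ω' (2*ℓ) (x t w))) μ := ((hΦint t).sub (hmint t)).const_mul _
    have hintR : Integrable (fun w => (((moreau X F r ω ω' (2*ℓ) (x t w) -
        moreau X F r ω ω' (2*ℓ) (x (t+1) w)) + 2*ℓ*η t*((F (x t w) + r (x t w)) -
        (F (x (t+1) w) + r (x (t+1) w)))) + 2*ℓ*(η t)^2*‖g t w - F' (x t w)‖^2) +
        2*ℓ*η t*⟪g t w - F' (x t w), h (x t w) - x t w⟫) μ := hf123.add hf4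
    have hmono := integral_mono hint_L hintR (fun w => hstep t w)
    rw [integral_const_mul, integral_sub (hΦint t) (hmint t)] at hmono
    rw [integral_add hf123 hf4, integral_add hf12 hf3, integral_add hf1 hf2,
      integral_sub (hmint t) (hmint (t+1)), integral_const_mul,
      integral_sub (hΦint t) (hΦint (t+1)), integral_const_mul, integral_const_mul,
      hmart t, mul_zero, add_zero] at hmono
    have hb := mul_le_mul_of_nonneg_left (hvar' t) (by positivity : (0:ℝ) ≤ 2*ℓ*(η t)^2)
    linarith [hmono, hb]
  set A : ℕ → ℝ := fun t => ∫ w, (F (x t w) + r (x t w)) ∂μ with hAdef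
  set B : ℕ → ℝ := fun t => ∫ w, moreau X F r ω ω' (2*ℓ) (x t w) ∂μ with hBdef
  have hAge : ∀ t, Φs ≤ A t := by
    intro t
    have h1 : ∫ (_ : Ω), Φs ∂μ ≤ ∫ w, (F (x t w) + r (x t w)) ∂μ :=
      integral_mono (integrable_const _) (hΦint t) (fun w => hΦs_le _ (hmem t w).1)
    simpa [measure_univ] using h1
  have hBge : ∀ t, Φs ≤ B t := by
    intro t
    have h1 : ∫ (_ : Ω), Φs ∂μ ≤ ∫ w, moreau X F r ω ω' (2*ℓ) (x t w) ∂μ :=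
      integral_mono (integrable_const _) (hmint t) (fun w => hφgeΦs _ (hmem t w))
    simpa [measure_univ] using h1
  have hA0 : A 0 = F x0 + r x0 := by
    have h1 : (fun w => F (x 0 w) + r (x 0 w)) = fun _ => F x0 + r x0 := by
      funext w; rw [hx0 w]
    show ∫ w, (F (x 0 w) + r (x 0 w)) ∂μ = F x0 + r x0
    rw [h1]; simp [measure_univ]
  have hB0 : B 0 = moreau X F r ω ω' (2*ℓ) x0 := by
    have h1 : (fun w => moreau X F r ω ω' (2*ℓ) (x 0 w)) =
        fun _ => moreau X F r ω ω' (2*ℓ) x0 := by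
      funext w; rw [hx0 w]
    show ∫ w, moreau X F r ω ω' (2*ℓ) (x 0 w) ∂μ = moreau X F r ω ω' (2*ℓ) x0
    rw [h1]; simp [measure_univ]
  -- Abel-type summation
  have habel : ∀ n, (∑ t ∈ Finset.range (n+1), η t * (A t - A (t+1))) ≤
      η 0 * (A 0 - Φs) - η n * (A (n+1) - Φs) := by
    intro n
    induction n with
    | zero => rw [Finset.sum_range_one]; exact le_of_eq (by ring)
    | succ n ih =>
      rw [Finset.sum_range_succ]
      have h1 : η (n+1) ≤ η n := hηmono n
      have h2 : Φs ≤ A (n+1) := hAge (n+1)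
      have h3 : 0 ≤ (η n - η (n+1))*(A (n+1) - Φs) :=
        mul_nonneg (by linarith) (by linarith)
      linarith [ih]
  have htelB : ∑ t ∈ Finset.range T, (B t - B (t+1)) = B 0 - B T :=
    Finset.sum_range_sub' B T
  obtain ⟨n, rfl⟩ : ∃ n, T = n + 1 := ⟨T - 1, (Nat.succ_pred_eq_of_pos hT).symm⟩
  have hsum1 : ∑ t ∈ Finset.range (n+1), 2*ℓ*η t*(A t - B t) ≤
      (B 0 - Φs) + 2*ℓ*(η 0 * (A 0 - Φs)) +
        2*ℓ*σ^2*∑ t ∈ Finset.range (n+1), (η t)^2 := by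
    have hs := Finset.sum_le_sum (fun t (_ : t ∈ Finset.range (n+1)) => hper t)
    rw [Finset.sum_add_distrib, Finset.sum_add_distrib, htelB] at hs
    have e1 : ∑ t ∈ Finset.range (n+1), 2*ℓ*η t*(A t - A (t+1)) =
        2*ℓ*∑ t ∈ Finset.range (n+1), η t * (A t - A (t+1)) := by
      rw [Finset.mul_sum]
      exact Finset.sum_congr rfl fun t _ => by ring
    have e2 : ∑ t ∈ Finset.range (n+1), 2*ℓ*(η t)^2*σ^2 =
        2*ℓ*σ^2*∑ t ∈ Finset.range (n+1), (η t)^2 := by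
      rw [Finset.mul_sum]
      exact Finset.sum_congr rfl fun t _ => by ring
    rw [e1, e2] at hs
    have h4 := habel n
    have h5 : Φs ≤ B (n+1) := hBge (n+1)
    have h6 : 0 ≤ η n * (A (n+1) - Φs) :=
      mul_nonneg (hηpos n).le (by linarith [hAge (n+1)])
    have h7 : 2*ℓ*(∑ t ∈ Finset.range (n+1), η t * (A t - A (t+1))) ≤
        2*ℓ*(η 0 * (A 0 - Φs) - η n * (A (n+1) - Φs)) :=
      mul_le_mul_of_nonneg_left h4 (by linarith)
    nlinarith [hs, h7, h6, hℓ]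
  -- comparison with the FBE
  have hDle : ∀ t, (∫ w, Dfbe X F' r ω ω' (3 * ℓ) (x t w) ∂μ) ≤ 6*ℓ*(A t - B t) := by
    intro t
    have hint : Integrable (fun w => 6*ℓ*((F (x t w) + r (x t w)) -
        moreau X F r ω ω' (2*ℓ) (x t w))) μ := ((hΦint t).sub (hmint t)).const_mul _
    have h1 := integral_mono (hDint t) hint (fun w => hC (x t w) (hmem t w))
    rw [integral_const_mul, integral_sub (hΦint t) (hmint t)] at h1
    exact h1
  have hfinal : ∑ t ∈ Finset.range (n+1), η t * (∫ w, Dfbe X F' r ω ω' (3 * ℓ) (x t w) ∂μ) ≤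
      3 * (B 0 - Φs + (A 0 - Φs)) + 6*ℓ*σ^2*∑ t ∈ Finset.range (n+1), (η t)^2 := by
    have hs : ∑ t ∈ Finset.range (n+1), η t * (∫ w, Dfbe X F' r ω ω' (3 * ℓ) (x t w) ∂μ) ≤
        ∑ t ∈ Finset.range (n+1), 3*(2*ℓ*η t*(A t - B t)) := by
      refine Finset.sum_le_sum fun t _ => ?_
      have := mul_le_mul_of_nonneg_left (hDle t) (hηpos t).le
      calc η t * (∫ w, Dfbe X F' r ω ω' (3 * ℓ) (x t w) ∂μ) ≤ η t * (6*ℓ*(A t - B t)) := this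
        _ = 3*(2*ℓ*η t*(A t - B t)) := by ring
    have e3 : ∑ t ∈ Finset.range (n+1), 3*(2*ℓ*η t*(A t - B t)) =
        3*∑ t ∈ Finset.range (n+1), 2*ℓ*η t*(A t - B t) := by
      rw [Finset.mul_sum]
    have h8 : 2*ℓ*(η 0 * (A 0 - Φs)) ≤ A 0 - Φs := by
      have h9 : (2*ℓ*η 0) * (A 0 - Φs) ≤ 1 * (A 0 - Φs) :=
        mul_le_mul_of_nonneg_right (hη2 0) (by linarith [hAge 0])
      linarith
    have h10 := mul_le_mul_of_nonneg_left hsum1 (by norm_num : (0:ℝ) ≤ 3)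
    nlinarith [hs, e3, h10, h8]
  -- conclusion
  have hspos : 0 < ∑ t ∈ Finset.range (n+1), η t :=
    Finset.sum_pos (fun i _ => hηpos i) (Finset.nonempty_range_iff.mpr (by omega))
  rw [inv_mul_eq_div]
  rw [div_le_div_iff₀ hspos hspos]
  rw [hA0, hB0] at hfinal
  have hmul := mul_le_mul_of_nonneg_right hfinal (le_of_lt hspos)
  calc (∑ t ∈ Finset.range (n+1), η t * ∫ w, Dfbe X F' r ω ω' (3 * ℓ) (x t w) ∂μ) *
        ∑ t ∈ Finset.range (n+1), η t ≤
      (3 * (moreau X F r ω ω' (2 * ℓ) x0 - Φs + (F x0 + r x0 - Φs)) +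
        6*ℓ*σ^2*∑ t ∈ Finset.range (n+1), (η t)^2) * ∑ t ∈ Finset.range (n+1), η t := by
        have : (2:ℝ)*ℓ = 2*ℓ := rfl
        exact hmul
    _ = (3 * (moreau X F r ω ω' (2 * ℓ) x0 - Φs + (F x0 + r x0 - Φs)) +
        6 * ℓ * σ ^ 2 * ∑ t ∈ Finset.range (n+1), η t ^ 2) *
        ∑ t ∈ Finset.range (n+1), η t := by ring
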